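/- arXiv:2009.13332 — 2 statements merged into one kernel-verified Lean document; each statement's English description precedes it below -/
import Mathlib

section
/- Let a, b > 0, let σ ∈ ℝ, and set x* = a/b. For every x > 0, the generator of the stochastic logistic equation applied to the Volterra function satisfies the identity (deriv v x)·(a·x − b·x²) + (1/2)·σ²·x²·(deriv² v x) = −(b/x*)·(x − x*)² + σ²/2, where v(x) = x/x* − ln(x/x*) − 1 (so that deriv v x = 1/x* − 1/x and deriv² v x = 1/x²). -/
lemma aux_deriv1 (xs : ℝ) (hxs : 0 < xs) (v : ℝ → ℝ)
    (hv : ∀ x : ℝ, v x = x / xs - Real.log (x / xs) - 1) :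
    ∀ x : ℝ, 0 < x → deriv v x = 1 / xs - 1 / x := by
  intro x hx
  have hev : v =ᶠ[nhds x] fun y => y / xs - (Real.log y - Real.log xs) - 1 := by
    filter_upwards [eventually_gt_nhds hx] with y hy
    rw [hv y, Real.log_div (ne_of_gt hy) (ne_of_gt hxs)]
  rw [hev.deriv_eq]
  have h1 : HasDerivAt (fun y : ℝ => y / xs - (Real.log y - Real.log xs) - 1)
      (1 / xs - 1 / x) x := by
    have := ((hasDerivAt_id x).div_const xs).sub
      ((Real.hasDerivAt_log (ne_of_gt hx)).sub_const (Real.log xs))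
    simpa [one_div] using this.sub_const 1
  exact h1.deriv

/-- The generator of the stochastic logistic equation
`dx = (a x − b x²) dt + σ x dw` applied to the Volterra function
`v(x) = x/x* − ln(x/x*) − 1` (with `x* = a/b`) equals
`−(b/x*)·(x − x*)² + σ²/2` for every `x > 0`. -/
theorem stmt_0 (a b σ : ℝ) (ha : 0 < a) (hb : 0 < b) (xs : ℝ) (hxs : xs = a / b)
    (v : ℝ → ℝ) (hv : ∀ x : ℝ, v x = x / xs - Real.log (x / xs) - 1) :
    ∀ x : ℝ, 0 < x →
      deriv v x * (a * x - b * x ^ 2)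
        + (1 / 2) * σ ^ 2 * x ^ 2 * deriv (deriv v) x
        = -(b / xs) * (x - xs) ^ 2 + σ ^ 2 / 2 := by
  intro x hx
  have hxs0 : 0 < xs := hxs ▸ div_pos ha hb
  have hd1 := aux_deriv1 xs hxs0 v hv
  have hev : deriv v =ᶠ[nhds x] fun y => 1 / xs - 1 / y := by
    filter_upwards [eventually_gt_nhds hx] with y hy
    exact hd1 y hy
  have hd2 : deriv (deriv v) x = 1 / x ^ 2 := by
    rw [hev.deriv_eq]
    have h1 : HasDerivAt (fun y : ℝ => 1 / xs - 1 / y) (1 / x ^ 2) x := by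
      have h := (hasDerivAt_inv (ne_of_gt hx)).const_sub (1 / xs)
      simpa [one_div, pow_two] using h.congr_deriv (by field_simp)
    exact h1.deriv
  rw [hd1 x hx, hd2]
  have hab : a = b * xs := by rw [hxs]; field_simp
  rw [hab]
  field_simp
  ring
end

section
/- Let a, b > 0, set x* = a/b, and let x : ℝ → ℝ be differentiable with x'(t) = a·x(t) − b·x(t)² and x(t) > 0 for all t ≥ 0. Then the function t ↦ v(x(t)), where v(x) = x/x* − ln(x/x*) − 1, is differentiable on [0, ∞) with derivative d/dt v(x(t)) = −(b/x*)·(x(t) − x*)² ≤ 0; in particular t ↦ v(x(t)) is monotonically nonincreasing on [0, ∞). -/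
/-!
With `a = b·x*`, the logistic field factors as `a·x − b·x² = −b·x·(x − x*)`, while
`v'(x) = 1/x* − 1/x = (x − x*)/(x*·x)`. Their product is `−(b/x*)·(x − x*)²`, so by the chain rule
`v ∘ x` has nonpositive derivative and is therefore antitone.
-/

noncomputable def volterra (xs y : ℝ) : ℝ := y / xs - Real.log (y / xs) - 1

theorem hasDerivAt_volterra {xs y : ℝ} (hxs : xs ≠ 0) (hy : y ≠ 0) :
    HasDerivAt (volterra xs) (1 / xs - 1 / y) y := by
  have hdiv : HasDerivAt (fun z => z / xs) (1 / xs) y := (hasDerivAt_id y).div_const xs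
  have h := (hdiv.sub (hdiv.log (div_ne_zero hy hxs))).sub_const 1
  rwa [div_div_div_cancel_right₀ hxs] at h

theorem volterra_deriv_mul_logistic {a b xs y : ℝ} (hab : a = b * xs) (hxs : xs ≠ 0)
    (hy : y ≠ 0) : (1 / xs - 1 / y) * (a * y - b * y ^ 2) = -(b / xs) * (y - xs) ^ 2 := by
  subst hab
  field_simp
  ring

/-- Along a positive solution of the logistic equation `ẋ = a·x − b·x²`,
the Volterra function `v(x) = x/x* − ln(x/x*) − 1` (with `x* = a/b`) has
derivative `d/dt v(x(t)) = −(b/x*)·(x(t) − x*)² ≤ 0` for all `t ≥ 0`; in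
particular `t ↦ v(x(t))` is monotonically nonincreasing on `[0, ∞)`. -/
theorem stmt_15 (a b : ℝ) (ha : 0 < a) (hb : 0 < b) (xs : ℝ) (hxs : xs = a / b)
    (v : ℝ → ℝ) (hv : ∀ y : ℝ, v y = y / xs - Real.log (y / xs) - 1)
    (x : ℝ → ℝ)
    (hx : ∀ t : ℝ, 0 ≤ t → HasDerivAt x (a * x t - b * (x t) ^ 2) t)
    (hpos : ∀ t : ℝ, 0 ≤ t → 0 < x t) :
    (∀ t : ℝ, 0 ≤ t →
      HasDerivAt (fun s => v (x s)) (-(b / xs) * (x t - xs) ^ 2) t ∧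
      -(b / xs) * (x t - xs) ^ 2 ≤ 0) ∧
    AntitoneOn (fun t => v (x t)) (Set.Ici (0 : ℝ)) := by
  obtain rfl : v = volterra xs := funext hv
  have hxs0 : 0 < xs := hxs ▸ div_pos ha hb
  have hab : a = b * xs := by rw [hxs, mul_div_cancel₀ a hb.ne']
  have hderiv (t : ℝ) (ht : 0 ≤ t) :
      HasDerivAt (fun s => volterra xs (x s)) (-(b / xs) * (x t - xs) ^ 2) t := by
    have hxt : x t ≠ 0 := (hpos t ht).ne'
    rw [← volterra_deriv_mul_logistic hab hxs0.ne' hxt]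
    exact (hasDerivAt_volterra hxs0.ne' hxt).comp t (hx t ht)
  have hnonpos (t : ℝ) : -(b / xs) * (x t - xs) ^ 2 ≤ 0 :=
    mul_nonpos_of_nonpos_of_nonneg (neg_nonpos.mpr (div_pos hb hxs0).le) (sq_nonneg _)
  refine ⟨fun t ht => ⟨hderiv t ht, hnonpos t⟩, ?_⟩
  refine antitoneOn_of_hasDerivWithinAt_nonpos (convex_Ici 0)
    (fun t ht => (hderiv t ht).continuousAt.continuousWithinAt) (fun t ht => ?_)
    (fun t _ => hnonpos t)
  rw [interior_Ici] at ht
  exact (hderiv t (le_of_lt ht)).hasDerivWithinAt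
end
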